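/- arXiv:1909.00890 — 5 statements merged into one kernel-verified Lean document; each statement's English description precedes it below -/
import Mathlib

section
/- The improper integral of -log(1-x)/x over the interval (0, 1/2) equals pi^2/12 - (log 2)^2/2. (This is the evaluation of the integral I_1, up to the scale factor 3, appearing in the paper's computation of the volume of the unit tangent bundle of the modular surface.) -/
/-!
Let `Li₂ c = ∫₀ᶜ -log (1 - x) / x dx`. Expanding `-log (1 - x) / x = ∑ xⁿ / (n + 1)` and
integrating termwise gives `Li₂ c = ∑ c ^ (n + 1) / (n + 1) ^ 2` on `[0, 1]`, so
`Li₂ 1 = ζ(2) = π² / 6`. The function `log x * log (1 - x)` is continuous on `[0, 1)`, vanishes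
at `0`, and has derivative `log (1 - x) / x - log x / (1 - x)`; together with the substitution
`x ↦ 1 - x` this yields Euler's reflection formula
`Li₂ c + Li₂ (1 - c) = π² / 6 - log c * log (1 - c)`, and `c = 1 / 2` gives the value.
-/

open MeasureTheory Real Set

/-- `Li₂ c` for `c ≤ 1`. -/
noncomputable def dilog (c : ℝ) : ℝ := ∫ x in (0 : ℝ)..c, -log (1 - x) / x

lemma dslope_neg_log_one_sub_of_ne {x : ℝ} (hx : x ≠ 0) :
    dslope (fun y => -log (1 - y)) 0 x = -log (1 - x) / x := by
  simp [dslope_of_ne _ hx, slope_def_field]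

lemma continuousOn_dslope_neg_log_one_sub :
    ContinuousOn (dslope (fun y => -log (1 - y)) 0) (Iio 1) := by
  rw [continuousOn_dslope (Iio_mem_nhds one_pos)]
  refine ⟨ContinuousOn.neg (ContinuousOn.log (by fun_prop) fun x hx => ?_), ?_⟩
  · exact (sub_pos.2 hx).ne'
  · exact ((differentiableAt_id.const_sub 1).log (by norm_num)).neg

lemma intervalIntegrable_neg_log_one_sub_div {c : ℝ} (hc : c < 1) :
    IntervalIntegrable (fun x => -log (1 - x) / x) volume 0 c := by
  have hsub : uIcc 0 c ⊆ Iio 1 := fun x hx => (hx.2.trans_lt (max_lt one_pos hc) :)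
  refine (continuousOn_dslope_neg_log_one_sub.mono hsub).intervalIntegrable.congr_uIoo
    fun x hx => dslope_neg_log_one_sub_of_ne ?_
  rintro rfl
  simp only [uIoo, mem_Ioo, inf_lt_left, not_le, left_lt_sup] at hx
  exact hx.1.not_gt hx.2

lemma intervalIntegrable_neg_log_div_one_sub {c : ℝ} (hc : c < 1) :
    IntervalIntegrable (fun x => -log x / (1 - x)) volume 0 c := by
  have hsub : uIcc 0 c ⊆ Iio 1 := fun x hx => (hx.2.trans_lt (max_lt one_pos hc) :)
  have hinv : ContinuousOn (fun x : ℝ => (1 - x)⁻¹) (uIcc 0 c) :=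
    ContinuousOn.inv₀ (by fun_prop) fun x hx => (sub_pos.2 (hsub hx)).ne'
  simpa [div_eq_mul_inv] using (intervalIntegral.intervalIntegrable_log').neg.mul_continuousOn hinv

lemma intervalIntegrable_neg_log_div_one_sub_zero_one :
    IntervalIntegrable (fun x => -log x / (1 - x)) volume 0 1 := by
  have hright := (intervalIntegrable_neg_log_one_sub_div (c := 1 / 2) (by norm_num)).comp_sub_left 1
  simp only [sub_sub_cancel, sub_zero] at hright
  exact (intervalIntegrable_neg_log_div_one_sub (c := 1 - 1 / 2) (by norm_num)).trans hright.symm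

lemma continuousOn_log_mul_log_one_sub :
    ContinuousOn (fun x => log x * log (1 - x)) (Iio 1) := by
  have hEq : EqOn (fun x => -(x * log x * dslope (fun y => -log (1 - y)) 0 x))
      (fun x => log x * log (1 - x)) (Iio 1) := by
    intro x _
    rcases eq_or_ne x 0 with rfl | hx
    · simp
    · simp only [dslope_neg_log_one_sub_of_ne hx]
      field_simp
  refine ContinuousOn.congr ?_ hEq.symm
  exact (continuous_mul_log.continuousOn.mul continuousOn_dslope_neg_log_one_sub).neg

lemma hasDerivAt_log_mul_log_one_sub {x : ℝ} (hx0 : x ≠ 0) (hx1 : x ≠ 1) :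
    HasDerivAt (fun x => log x * log (1 - x)) (-log x / (1 - x) - -log (1 - x) / x) x := by
  have h1x : 1 - x ≠ 0 := sub_ne_zero.2 hx1.symm
  refine ((hasDerivAt_log hx0).fun_mul (((hasDerivAt_id' x).const_sub 1).log h1x)).congr_deriv ?_
  field_simp
  ring

lemma integral_neg_log_div_one_sub_sub_dilog {c : ℝ} (hc0 : 0 ≤ c) (hc1 : c < 1) :
    (∫ x in (0 : ℝ)..c, -log x / (1 - x)) - dilog c = log c * log (1 - c) := by
  rw [dilog, ← intervalIntegral.integral_sub (intervalIntegrable_neg_log_div_one_sub hc1)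
    (intervalIntegrable_neg_log_one_sub_div hc1)]
  have hIcc : Icc 0 c ⊆ Iio 1 := fun x hx => hx.2.trans_lt hc1
  rw [intervalIntegral.integral_eq_sub_of_hasDeriv_right_of_le hc0
    (continuousOn_log_mul_log_one_sub.mono hIcc)
    (fun x hx => (hasDerivAt_log_mul_log_one_sub hx.1.ne' (hx.2.trans hc1).ne).hasDerivWithinAt)
    ((intervalIntegrable_neg_log_div_one_sub hc1).sub (intervalIntegrable_neg_log_one_sub_div hc1))]
  simp

lemma dilog_one_sub (c : ℝ) : dilog (1 - c) = ∫ x in c..1, -log x / (1 - x) := by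
  have h := intervalIntegral.integral_comp_sub_left (fun x => -log x / (1 - x)) 1
    (a := 0) (b := 1 - c)
  simpa [dilog] using h

lemma hasSum_one_div_succ_sq : HasSum (fun n : ℕ => 1 / ((n : ℝ) + 1) ^ 2) (π ^ 2 / 6) := by
  have h := (hasSum_nat_add_iff' (f := fun n : ℕ => 1 / (n : ℝ) ^ 2) 1).mpr hasSum_zeta_two
  simpa using h

lemma summable_pow_succ_div_succ_sq {c : ℝ} (hc0 : 0 ≤ c) (hc1 : c ≤ 1) :
    Summable fun n : ℕ => c ^ (n + 1) / ((n : ℝ) + 1) ^ 2 :=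
  hasSum_one_div_succ_sq.summable.of_nonneg_of_le (fun n => by positivity)
    fun n => div_le_div_of_nonneg_right (pow_le_one₀ hc0 hc1) (by positivity)

lemma hasSum_pow_div_succ {x : ℝ} (hx0 : 0 < x) (hx1 : x < 1) :
    HasSum (fun n : ℕ => x ^ n / (n + 1)) (-log (1 - x) / x) := by
  have h := (hasSum_pow_div_log_of_abs_lt_one (abs_lt.2 ⟨by linarith, hx1⟩)).div_const x
  refine h.congr_fun fun n => ?_
  field_simp
  ring

lemma setIntegral_Ioo_pow_div_succ (n : ℕ) {c : ℝ} (hc : 0 ≤ c) :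
    ∫ x in Ioo 0 c, x ^ n / ((n : ℝ) + 1) = c ^ (n + 1) / ((n : ℝ) + 1) ^ 2 := by
  rw [← integral_Ioc_eq_integral_Ioo, ← intervalIntegral.integral_of_le hc,
    intervalIntegral.integral_div, integral_pow, zero_pow n.succ_ne_zero, sub_zero, div_div, ← sq]

theorem hasSum_dilog {c : ℝ} (hc0 : 0 ≤ c) (hc1 : c ≤ 1) :
    HasSum (fun n : ℕ => c ^ (n + 1) / ((n : ℝ) + 1) ^ 2) (dilog c) := by
  have hseries : dilog c = ∫ x in Ioo 0 c, ∑' n : ℕ, x ^ n / ((n : ℝ) + 1) := by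
    rw [dilog, intervalIntegral.integral_of_le hc0, integral_Ioc_eq_integral_Ioo]
    refine setIntegral_congr_fun measurableSet_Ioo fun x hx => ?_
    exact (hasSum_pow_div_succ hx.1 (hx.2.trans_le hc1)).tsum_eq.symm
  have hnorm (n : ℕ) :
      ∫ x in Ioo 0 c, ‖x ^ n / ((n : ℝ) + 1)‖ = c ^ (n + 1) / ((n : ℝ) + 1) ^ 2 := by
    rw [← setIntegral_Ioo_pow_div_succ n hc0]
    refine setIntegral_congr_fun measurableSet_Ioo fun x hx => norm_of_nonneg ?_
    have := hx.1.le
    positivity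
  rw [hseries]
  refine (hasSum_integral_of_summable_integral_norm (fun n => ?_) ?_).congr_fun fun n => ?_
  · exact (continuous_pow n).div_const _ |>.integrableOn_Icc.mono_set Ioo_subset_Icc_self
  · simpa only [hnorm] using summable_pow_succ_div_succ_sq hc0 hc1
  · exact (setIntegral_Ioo_pow_div_succ n hc0).symm

theorem dilog_one : dilog 1 = π ^ 2 / 6 :=
  (hasSum_dilog zero_le_one le_rfl).unique (by simpa using hasSum_one_div_succ_sq)

theorem dilog_add_dilog_one_sub {c : ℝ} (hc0 : 0 ≤ c) (hc1 : c ≤ 1) :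
    dilog c + dilog (1 - c) = π ^ 2 / 6 - log c * log (1 - c) := by
  rcases hc1.lt_or_eq with hc1 | rfl
  · have h01 : dilog 1 = ∫ x in (0 : ℝ)..1, -log x / (1 - x) := by simpa using dilog_one_sub 0
    rw [← dilog_one, dilog_one_sub, h01, ← intervalIntegral.integral_interval_sub_left
      intervalIntegrable_neg_log_div_one_sub_zero_one (intervalIntegrable_neg_log_div_one_sub hc1)]
    linarith [integral_neg_log_div_one_sub_sub_dilog hc0 hc1]
  · rw [sub_self, dilog_one]
    simp [dilog]

theorem dilog_one_half : dilog (1 / 2) = π ^ 2 / 12 - log 2 ^ 2 / 2 := by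
  have hreflect := dilog_add_dilog_one_sub (c := 1 / 2) (by norm_num) (by norm_num)
  have hlog : log (1 / 2 : ℝ) = -log 2 := by rw [one_div, log_inv]
  rw [show (1 : ℝ) - 1 / 2 = 1 / 2 by norm_num, hlog] at hreflect
  linarith

/-- The improper integral of `-log(1-x)/x` over `(0, 1/2)` equals
`π²/12 - (log 2)²/2`. -/
theorem integral_neg_log_one_sub_div_self :
    ∫ x in Set.Ioo (0 : ℝ) (1 / 2), -Real.log (1 - x) / x
      = Real.pi ^ 2 / 12 - (Real.log 2) ^ 2 / 2 := by
  rw [← integral_Ioc_eq_integral_Ioo, ← intervalIntegral.integral_of_le (by norm_num)]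
  exact dilog_one_half
end

section
/- Let d >= 2 and let A be a d-by-d real matrix with nonnegative entries and determinant 1. Then for every Borel set S contained in the standard simplex Delta, the measure of the image PA(S) satisfies mu(PA(S)) = \int_S ||A x||_1^{-d} d mu(x). In other words, the Jacobian of the projective linear map PA restricted to the standard simplex equals 1/||A x||_1^d (equation (5.2) of the paper, following Veech). -/
open MeasureTheory

/-- The standard simplex `Δ = {x : ℝ^d | ∀ i, 0 ≤ x i, ∑ i, x i = 1}`,
viewed inside Euclidean space. -/
def euclideanStdSimplex (d : ℕ) : Set (EuclideanSpace ℝ (Fin d)) :=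
  {x | (∀ i, 0 ≤ x i) ∧ ∑ i, x i = 1}

/-- The projectivized linear map `PA(x) = A x / ‖A x‖₁`. -/
noncomputable def projLinMap (d : ℕ) (A : Matrix (Fin d) (Fin d) ℝ) :
    EuclideanSpace ℝ (Fin d) → EuclideanSpace ℝ (Fin d) :=
  fun x => (WithLp.equiv 2 (Fin d → ℝ)).symm
    ((∑ i, |A.mulVec (fun j => x j) i|)⁻¹ • A.mulVec (fun j => x j))

/-!
The simplex lies in the affine hyperplane `ℓ = 1`, where `ℓ` is the sum of coordinates, and on it
`PA` is the smooth map `x ↦ A x / ℓ (A x)`, which maps that hyperplane into itself. Translation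
identifies the hyperplane isometrically with `ker ℓ`, on which `μH[d - 1]` is a Haar measure, so
the change of variables formula applies, with Jacobian the determinant of the derivative of `PA`
restricted to `ker ℓ`. Writing `s = ℓ (A x)`, this restriction is `s⁻¹ Q` with
`Q = A ∘ (id + (ℓ - ℓ ∘ A) ⊗ s⁻¹ x)`. Since `ℓ ∘ Q = ℓ`, `Q` acts trivially on `ℝ^d ⧸ ker ℓ`, so
`det (Q|ker ℓ) = det Q = det A · (1 + (ℓ x - s) / s) = det A / s` by the determinant formula for
transvections, and the Jacobian is `s^(1-d) · det A / s = det A / s^d`.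
-/

open Set Module

theorem LinearMap.det_restrict_of_sub_mem {K V : Type*} [Field K] [AddCommGroup V] [Module K V]
    [FiniteDimensional K V] (W : Submodule K V) (Q : V →ₗ[K] V) (hW : W ≤ W.comap Q)
    (hQ : ∀ v, Q v - v ∈ W) : (Q.restrict hW).det = Q.det := by
  have hquot : W.mapQ W Q hW = LinearMap.id :=
    W.linearMap_qext <| LinearMap.ext fun v => (Submodule.Quotient.eq W).2 (hQ v)
  rw [LinearMap.det_eq_det_mul_det W Q hW, hquot, LinearMap.det_id, mul_one]

theorem Isometry.setLIntegral_preimage_hausdorffMeasure {X Y : Type*}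
    [EMetricSpace X] [CompleteSpace X] [MeasurableSpace X] [BorelSpace X]
    [EMetricSpace Y] [MeasurableSpace Y] [BorelSpace Y]
    {ψ : X → Y} (hψ : Isometry ψ) {d : ℝ} (hd : 0 ≤ d) {S : Set Y} (hS : S ⊆ range ψ)
    (F : Y → ENNReal) :
    ∫⁻ x in ψ ⁻¹' S, F (ψ x) ∂μH[d] = ∫⁻ y in S, F y ∂μH[d] := by
  have hψm := hψ.isClosedEmbedding.measurableEmbedding
  rw [← Measure.restrict_restrict_of_subset hS, ← hψ.map_hausdorffMeasure (Or.inl hd),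
    hψm.restrict_map, hψm.lintegral_map]

variable {E : Type*} [NormedAddCommGroup E] [NormedSpace ℝ E]

theorem hausdorffMeasure_image_eq_lintegral_abs_det [MeasurableSpace E] [BorelSpace E]
    (K : Submodule ℝ E) [FiniteDimensional ℝ K]
    (p : E) {S : Set E} (hS : MeasurableSet S) (hSK : ∀ x ∈ S, x - p ∈ K)
    {f : E → E} (hfK : ∀ x ∈ S, f x - p ∈ K) (hf : InjOn f S) (f' : E → K →L[ℝ] K)
    (hf' : ∀ x ∈ S, HasFDerivAt (fun v : K => f (x + v)) (K.subtypeL ∘L f' x) 0) :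
    μH[finrank ℝ K] (f '' S) = ∫⁻ x in S, ENNReal.ofReal |(f' x).det| ∂μH[finrank ℝ K] := by
  obtain ⟨P, hP⟩ := Submodule.ClosedComplemented.of_finiteDimensional K
  set ψ : K → E := fun v => v + p
  have hψ : Isometry ψ := Isometry.of_dist_eq fun v w => by
    rw [dist_add_right]; rfl
  set T := ψ ⁻¹' S
  have hST : ψ '' T = S :=
    image_preimage_eq_of_subset fun x hx => ⟨⟨x - p, hSK x hx⟩, by simp [ψ]⟩
  -- `f` read in the chart `ψ`; the projection `P` only makes it `K`-valued off `T`
  set g : K → K := fun v => P (f (ψ v) - p)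
  have hψg : ∀ v ∈ T, ψ (g v) = f (ψ v) := fun v hv => by
    simp only [ψ, g]
    rw [hP ⟨_, hfK _ hv⟩, sub_add_cancel]
  have hg_inj : InjOn g T := fun v hv w hw hvw =>
    hψ.injective (hf hv hw (by rw [← hψg v hv, ← hψg w hw, hvw]))
  have hg' : ∀ v ∈ T, HasFDerivWithinAt g (f' (ψ v)) T v := fun v hv => by
    have h0 : HasFDerivAt (fun u : K => f (ψ v + u)) (K.subtypeL ∘L f' (ψ v)) (v - v) := by
      simpa using hf' (ψ v) hv
    have hshift := h0.comp (f := fun w : K => w - v) v ((hasFDerivAt_id v).sub_const v)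
    have hg_eq : (fun w : K => P (f (ψ v + ↑(w - v)) - p)) = g := by
      funext w
      rw [show ψ v + ↑(w - v) = ψ w by simp only [ψ, Submodule.coe_sub]; abel]
    have hPf : P ∘L ((K.subtypeL ∘L f' (ψ v)) ∘L ContinuousLinearMap.id ℝ K) = f' (ψ v) := by
      ext u; simp [hP]
    rw [← hg_eq, ← hPf]
    exact (P.hasFDerivAt.comp v (hshift.sub_const p)).hasFDerivWithinAt
  have himage : f '' S = ψ '' (g '' T) := by
    rw [← hST, image_image, image_image]
    exact image_congr fun v hv => (hψg v hv).symm
  rw [himage, hψ.hausdorffMeasure_image (Or.inl (Nat.cast_nonneg _)),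
    ← lintegral_abs_det_fderiv_eq_addHaar_image _ (hS.preimage hψ.continuous.measurable) hg'
      hg_inj,
    ← hψ.setLIntegral_preimage_hausdorffMeasure (Nat.cast_nonneg _)
      (hST ▸ image_subset_range _ _)]

section Projective

variable (ℓ : StrongDual ℝ E) (L : E →L[ℝ] E)

noncomputable def projectiveMap (x : E) : E := (ℓ (L x))⁻¹ • L x

noncomputable def projectiveMapDeriv (x : E) : E →L[ℝ] E :=
  (ℓ (L x))⁻¹ • (L - (ℓ ∘L L).smulRight (projectiveMap ℓ L x))

theorem hasFDerivAt_projectiveMap {x : E} (hx : ℓ (L x) ≠ 0) :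
    HasFDerivAt (projectiveMap ℓ L) (projectiveMapDeriv ℓ L x) x := by
  have hinv : HasFDerivAt (fun y => (ℓ (L y))⁻¹) (-((ℓ (L x)) ^ 2)⁻¹ • (ℓ ∘L L)) x :=
    ((hasFDerivAt_inv hx).comp x (ℓ ∘L L).hasFDerivAt).congr_fderiv <| by ext; simp [mul_comm]
  refine (hinv.smul L.hasFDerivAt).congr_fderiv ?_
  ext v
  simp only [add_apply, smul_apply, sub_apply, ContinuousLinearMap.smulRight_apply,
    ContinuousLinearMap.comp_apply, projectiveMapDeriv, projectiveMap]
  module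

-- For every `x`: where `ℓ (L x) = 0`, the junk value `0⁻¹ = 0` makes the derivative vanish.
theorem projectiveMapDeriv_apply_mem_ker (x v : E) :
    projectiveMapDeriv ℓ L x v ∈ LinearMap.ker ℓ.toLinearMap := by
  rcases eq_or_ne (ℓ (L x)) 0 with hx | hx
  · simp [projectiveMapDeriv, hx]
  · simp [projectiveMapDeriv, projectiveMap, hx]

noncomputable def projectiveMapDerivKer (x : E) :
    LinearMap.ker ℓ.toLinearMap →L[ℝ] LinearMap.ker ℓ.toLinearMap :=
  (projectiveMapDeriv ℓ L x ∘L (LinearMap.ker ℓ.toLinearMap).subtypeL).codRestrict _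
    fun v => projectiveMapDeriv_apply_mem_ker ℓ L x v

theorem det_projectiveMapDerivKer [FiniteDimensional ℝ E] {x : E} (hx : ℓ (L x) ≠ 0) :
    (projectiveMapDerivKer ℓ L x).det = ℓ x * L.det / ℓ (L x) ^ finrank ℝ E := by
  set s := ℓ (L x)
  set W := LinearMap.ker ℓ.toLinearMap
  set Q : E →ₗ[ℝ] E :=
    L.toLinearMap ∘ₗ LinearMap.transvection (ℓ.toLinearMap - (ℓ ∘L L).toLinearMap) (s⁻¹ • x)
  have hQ : ∀ v, Q v - v ∈ W := fun v => by
    simp only [Q, W, LinearMap.mem_ker, LinearMap.comp_apply, LinearMap.transvection.apply,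
      LinearMap.sub_apply, ContinuousLinearMap.coe_coe, ContinuousLinearMap.comp_apply, map_add,
      map_sub, map_smul, smul_eq_mul]
    field_simp
    ring
  have hW : W ≤ W.comap Q := fun v hv => by
    simpa using W.add_mem (hQ v) hv
  have hrestrict : (projectiveMapDerivKer ℓ L x : W →ₗ[ℝ] W) = s⁻¹ • Q.restrict hW := by
    ext ⟨v, hv⟩
    have hv0 : ℓ v = 0 := hv
    change s⁻¹ • (L v - ℓ (L v) • s⁻¹ • L x) = s⁻¹ • L (v + (ℓ v - ℓ (L v)) • s⁻¹ • x)
    rw [hv0, map_add, map_smul, map_smul]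
    module
  have hℓ : ℓ.toLinearMap ≠ 0 := fun h => hx (by simpa using LinearMap.congr_fun h (L x))
  have hfin := Module.Dual.finrank_ker_add_one_of_ne_zero hℓ
  rw [ContinuousLinearMap.det, hrestrict, LinearMap.det_smul,
    LinearMap.det_restrict_of_sub_mem W Q hW hQ, LinearMap.det_comp, LinearMap.transvection.det,
    ← hfin]
  simp only [LinearMap.sub_apply, ContinuousLinearMap.coe_coe, ContinuousLinearMap.coe_comp,
    Function.comp_apply, map_smul, smul_eq_mul]
  rw [show ℓ (L x) = s from rfl, pow_succ, inv_pow]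
  field_simp
  rw [add_sub_cancel]

theorem apply_projectiveMap_eq_one {x : E} (hx : ℓ (L x) ≠ 0) : ℓ (projectiveMap ℓ L x) = 1 := by
  simp [projectiveMap, hx]

theorem injOn_projectiveMap (hL : Function.Injective L) {S : Set E} (hSℓ : ∀ x ∈ S, ℓ x = 1)
    (hSL : ∀ x ∈ S, ℓ (L x) ≠ 0) : InjOn (projectiveMap ℓ L) S := by
  intro x hx y hy hxy
  have hscaled : (ℓ (L x))⁻¹ • x = (ℓ (L y))⁻¹ • y :=
    hL (by simpa [projectiveMap] using hxy)
  have hscale : (ℓ (L x))⁻¹ = (ℓ (L y))⁻¹ := by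
    simpa [hSℓ x hx, hSℓ y hy] using congrArg ℓ hscaled
  rwa [hscale, smul_right_inj (inv_ne_zero (hSL y hy))] at hscaled

theorem hasFDerivAt_projectiveMap_add_ker {x : E} (hx : ℓ (L x) ≠ 0) :
    HasFDerivAt (fun v : LinearMap.ker ℓ.toLinearMap => projectiveMap ℓ L (x + v))
      ((LinearMap.ker ℓ.toLinearMap).subtypeL ∘L projectiveMapDerivKer ℓ L x) 0 := by
  have hx' : ℓ (L (x + ((0 : LinearMap.ker ℓ.toLinearMap) : E))) ≠ 0 := by simpa using hx
  have h := (hasFDerivAt_projectiveMap ℓ L hx').comp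
    (f := fun v : LinearMap.ker ℓ.toLinearMap => x + v) 0
    ((LinearMap.ker ℓ.toLinearMap).subtypeL.hasFDerivAt.const_add x)
  simp only [ZeroMemClass.coe_zero, add_zero] at h
  exact h

theorem hausdorffMeasure_image_projectiveMap [FiniteDimensional ℝ E] [MeasurableSpace E]
    [BorelSpace E] (hL : Function.Injective L) {S : Set E} (hS : MeasurableSet S)
    (hSℓ : ∀ x ∈ S, ℓ x = 1) (hSL : ∀ x ∈ S, ℓ (L x) ≠ 0) :
    μH[(finrank ℝ E : ℝ) - 1] (projectiveMap ℓ L '' S)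
      = ∫⁻ x in S, ENNReal.ofReal |L.det / ℓ (L x) ^ finrank ℝ E| ∂μH[(finrank ℝ E : ℝ) - 1] := by
  rcases S.eq_empty_or_nonempty with rfl | ⟨p, hp⟩
  · simp
  have hℓ : ℓ.toLinearMap ≠ 0 := fun h => by simpa [hSℓ p hp] using LinearMap.congr_fun h p
  have hdim : (finrank ℝ E : ℝ) - 1 = finrank ℝ (LinearMap.ker ℓ.toLinearMap) := by
    rw [← Dual.finrank_ker_add_one_of_ne_zero hℓ]
    push_cast
    ring
  rw [hdim, hausdorffMeasure_image_eq_lintegral_abs_det _ p hS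
    (fun x hx => by simp [hSℓ x hx, hSℓ p hp])
    (fun x hx => by simp [apply_projectiveMap_eq_one ℓ L (hSL x hx), hSℓ p hp])
    (injOn_projectiveMap ℓ L hL hSℓ hSL) _
    (fun x hx => hasFDerivAt_projectiveMap_add_ker ℓ L (hSL x hx))]
  refine setLIntegral_congr_fun hS fun x hx => ?_
  rw [det_projectiveMapDerivKer ℓ L (hSL x hx), hSℓ x hx, one_mul]

end Projective

section Simplex

variable {d : ℕ} {A : Matrix (Fin d) (Fin d) ℝ}

noncomputable def coordSum (d : ℕ) : StrongDual ℝ (EuclideanSpace ℝ (Fin d)) :=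
  ∑ i, EuclideanSpace.proj i

theorem coordSum_apply (x : EuclideanSpace ℝ (Fin d)) : coordSum d x = ∑ i, x i := by
  simp [coordSum]

theorem mulVec_nonneg_of_mem_stdSimplex (hA : ∀ i j, 0 ≤ A i j) {x : EuclideanSpace ℝ (Fin d)}
    (hx : x ∈ euclideanStdSimplex d) (i : Fin d) : 0 ≤ A.mulVec (fun j => x j) i := by
  simp only [Matrix.mulVec, dotProduct]
  exact Finset.sum_nonneg fun j _ => mul_nonneg (hA i j) (hx.1 j)

theorem sum_mulVec_pos_of_mem_stdSimplex (hA : ∀ i j, 0 ≤ A i j) (hdet : A.det ≠ 0)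
    {x : EuclideanSpace ℝ (Fin d)} (hx : x ∈ euclideanStdSimplex d) :
    0 < ∑ i, A.mulVec (fun j => x j) i := by
  have hnonneg := fun i (_ : i ∈ Finset.univ) => mulVec_nonneg_of_mem_stdSimplex hA hx i
  refine (Finset.sum_nonneg hnonneg).lt_of_ne fun h => ?_
  have hAx : A.mulVec (fun j => x j) = 0 :=
    funext fun i => (Finset.sum_eq_zero_iff_of_nonneg hnonneg).1 h.symm i (Finset.mem_univ i)
  have hx0 : (fun j => x j) = 0 := Matrix.eq_zero_of_mulVec_eq_zero hdet hAx
  simpa [hx0] using hx.2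

theorem projLinMap_eq_projectiveMap (hA : ∀ i j, 0 ≤ A i j) {x : EuclideanSpace ℝ (Fin d)}
    (hx : x ∈ euclideanStdSimplex d) :
    projLinMap d A x =
      projectiveMap (coordSum d) (Matrix.toLpLin 2 2 A).toContinuousLinearMap x := by
  ext i
  simp [projLinMap, projectiveMap, coordSum_apply,
    abs_of_nonneg (mulVec_nonneg_of_mem_stdSimplex hA hx _)]

end Simplex

theorem jacobian_projLinMap_general (d : ℕ)
    (A : Matrix (Fin d) (Fin d) ℝ)
    (hA : ∀ i j, 0 ≤ A i j) (hdet : A.det = 1)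
    (S : Set (EuclideanSpace ℝ (Fin d))) (hS : MeasurableSet S)
    (hSΔ : S ⊆ euclideanStdSimplex d) :
    μH[(d : ℝ) - 1] (projLinMap d A '' S)
      = ∫⁻ x in S, ENNReal.ofReal ((∑ i, |A.mulVec (fun j => x j) i|) ^ d)⁻¹
          ∂(μH[(d : ℝ) - 1] : Measure (EuclideanSpace ℝ (Fin d))) := by
  set L := (Matrix.toLpLin 2 2 A).toContinuousLinearMap
  have hLx : ∀ x, coordSum d (L x) = ∑ i, A.mulVec (fun j => x j) i := fun x => by
    simp [L, coordSum_apply]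
  have hLdet : L.det = 1 := by simp [L, hdet]
  have hL : Function.Injective L := fun x y hxy =>
    WithLp.ofLp_injective 2 (Matrix.mulVec_injective_iff_isUnit.2
      (A.isUnit_iff_isUnit_det.2 (by simp [hdet])) (congrArg WithLp.ofLp hxy))
  have hpos : ∀ x ∈ S, 0 < coordSum d (L x) := fun x hx =>
    hLx x ▸ sum_mulVec_pos_of_mem_stdSimplex hA (by simp [hdet]) (hSΔ hx)
  have hproj := hausdorffMeasure_image_projectiveMap (coordSum d) L hL hS
    (fun x hx => (coordSum_apply x).trans (hSΔ hx).2) fun x hx => (hpos x hx).ne'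
  rw [finrank_euclideanSpace_fin] at hproj
  rw [image_congr fun x hx => projLinMap_eq_projectiveMap hA (hSΔ hx), hproj]
  refine setLIntegral_congr_fun hS fun x hx => ?_
  rw [hLdet, one_div, abs_of_pos (by positivity [hpos x hx]), hLx]
  simp only [abs_of_nonneg (mulVec_nonneg_of_mem_stdSimplex hA (hSΔ hx) _)]

/-- For a `d × d` matrix `A` with nonnegative entries and determinant `1`, the
Jacobian of the projectivized map `PA : Δ → Δ` with respect to the
`(d-1)`-dimensional Hausdorff measure is `‖A x‖₁⁻ᵈ`: for every Borel subset
`S ⊆ Δ` we have `μ (PA '' S) = ∫ x in S, ‖A x‖₁⁻ᵈ dμ(x)`. -/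
theorem jacobian_projLinMap (d : ℕ) (hd : 2 ≤ d)
    (A : Matrix (Fin d) (Fin d) ℝ)
    (hA : ∀ i j, 0 ≤ A i j) (hdet : A.det = 1)
    (S : Set (EuclideanSpace ℝ (Fin d))) (hS : MeasurableSet S)
    (hSΔ : S ⊆ euclideanStdSimplex d) :
    μH[(d : ℝ) - 1] (projLinMap d A '' S)
      = ∫⁻ x in S, ENNReal.ofReal ((∑ i, |A.mulVec (fun j => x j) i|) ^ d)⁻¹
          ∂(μH[(d : ℝ) - 1] : Measure (EuclideanSpace ℝ (Fin d))) :=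
  jacobian_projLinMap_general d A hA hdet S hS hSΔ
end

section
/- Let d >= 2, let v_1, ..., v_d be affinely independent points of R^d, let Sigma be their convex hull (a (d-1)-dimensional simplex in R^d), and let lambda in R^d satisfy <lambda, v_j> > 0 for every j. Then \int_Sigma <lambda, x>^{-d} d mu(x) = mu(Sigma) / (prod_{j=1}^d <lambda, v_j>), where mu is the (d-1)-dimensional Hausdorff measure on R^d. (This is the classical simplex integral formula, used in the paper's proof of the Kerckhoff lemma for the simplices Delta^i triangulating H_tau.) -/
/-!
Write `n = d - 1`. An affine isometry `ℝⁿ → ℝᵈ` carries a simplex `K` in `ℝⁿ` onto `Σ` and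
Lebesgue measure (which is `μH[n]` on `ℝⁿ`) onto `μH[n]` restricted to `Σ`, so it suffices to
show `∫_K f⁻⁽ⁿ⁺¹⁾ dμ = μ K / ∏ⱼ f uⱼ` for a full-dimensional simplex `K` with vertices `uⱼ`, a
Haar measure `μ` and an affine function `f` positive at the vertices.

For this, look at the cone over `{1} × K` in `ℝ × ℝⁿ`, cut off by `t * f (y / t) ≤ 1`. Its slice
at height `t > 0` is `t • (K ∩ {t * f ≤ 1})`, so by Fubini its volume is
`∫_K ∫_0^{1/f} tⁿ dt = (n + 1)⁻¹ ∫_K f⁻⁽ⁿ⁺¹⁾`. The linear map scaling each edge `(1, uⱼ)` of the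
cone by `f uⱼ` pulls the cone cut off by `t ≤ 1` back to the cone cut off by `f`, so the two
volumes differ by the factor `∏ⱼ f uⱼ`, and the first one is `(n + 1)⁻¹ μ K`.
-/

open MeasureTheory Set Pointwise
open scoped ENNReal RealInnerProductSpace

lemma setLIntegral_Ioc_zero_pow (n : ℕ) {b : ℝ} (hb : 0 ≤ b) :
    ∫⁻ t in Ioc 0 b, ENNReal.ofReal (t ^ n) = ENNReal.ofReal (b ^ (n + 1) / (n + 1)) := by
  rw [← ofReal_integral_eq_lintegral_ofReal, ← intervalIntegral.integral_of_le hb, integral_pow]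
  · norm_num
  · exact (intervalIntegral.intervalIntegrable_pow n).1
  · filter_upwards [ae_restrict_mem measurableSet_Ioc] with t ht
    exact pow_nonneg ht.1.le n

section Algebra

variable {ι E : Type*} [Fintype ι] [AddCommGroup E] [Module ℝ E]

theorem convexHull_range_eq_image_stdSimplex (u : ι → E) :
    convexHull ℝ (range u) = (fun w : ι → ℝ => ∑ j, w j • u j) '' stdSimplex ℝ ι := by
  classical
  have h := (Fintype.linearCombination ℝ u).image_convexHull (range fun j => Pi.single j 1)
  rw [convexHull_rangle_single_eq_stdSimplex, ← range_comp] at h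
  convert h.symm using 2 <;> simp [Function.comp_def, Fintype.linearCombination_apply]

lemma AffineMap.mul_apply_inv_smul_sum (g : E →ᵃ[ℝ] ℝ) (s : ι → ℝ) (u : ι → E)
    (hs : ∑ j, s j ≠ 0) :
    (∑ j, s j) * g ((∑ j, s j)⁻¹ • ∑ j, s j • u j) = ∑ j, s j * g (u j) := by
  have hg : ∀ x, g x = g.linear x + g 0 := fun x => by simpa using g.map_vadd 0 x
  generalize g 0 = c at hg
  simp only [hg, map_smul, map_sum, smul_eq_mul, mul_add, Finset.sum_add_distrib,
    ← Finset.sum_mul]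
  rw [← mul_assoc, mul_inv_cancel₀ hs, one_mul]

end Algebra

theorem AffineIndependent.linearIndependent_one_prod {k V ι : Type*} [Ring k] [AddCommGroup V]
    [Module k V] {u : ι → V} (hu : AffineIndependent k u) :
    LinearIndependent k fun j => ((1 : k), u j) :=
  linearIndependent_iff'.2 fun s w hw =>
    hu.eq_zero_of_sum_eq_zero (by simpa [Prod.fst_sum] using congrArg Prod.fst hw)
      (by simpa [Prod.snd_sum] using congrArg Prod.snd hw)

/-- The cone over `{1} × K`, cut off where the homogenization `(t, y) ↦ t * g (t⁻¹ • y)` of `g`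
exceeds `1`. -/
def truncCone {E : Type*} [AddCommGroup E] [Module ℝ E] (K : Set E) (g : E → ℝ) :
    Set (ℝ × E) :=
  {p | 0 < p.1 ∧ p.1⁻¹ • p.2 ∈ K ∧ p.1 * g (p.1⁻¹ • p.2) ≤ 1}

section TruncCone

variable {E : Type*}

theorem truncCone_convexHull_eq_image {ι : Type*} [Fintype ι] [AddCommGroup E] [Module ℝ E]
    (u : ι → E) (g : E →ᵃ[ℝ] ℝ) :
    truncCone (convexHull ℝ (range u)) g = (fun s : ι → ℝ => ∑ j, s j • ((1 : ℝ), u j)) ''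
      {s | 0 ≤ s ∧ s ≠ 0 ∧ ∑ j, s j * g (u j) ≤ 1} := by
  have hsum : ∀ s : ι → ℝ, ∑ j, s j • ((1 : ℝ), u j) = (∑ j, s j, ∑ j, s j • u j) := fun s => by
    ext <;> simp [Prod.fst_sum, Prod.snd_sum]
  simp_rw [hsum]
  ext ⟨t, y⟩
  simp only [truncCone, convexHull_range_eq_image_stdSimplex, mem_ofPred_eq, mem_image,
    Prod.mk.injEq]
  constructor
  · rintro ⟨ht, ⟨w, ⟨hw0, hw1⟩, hwy⟩, hle⟩
    have hwt : ∑ j, (t • w) j = t := by simp [← Finset.mul_sum, hw1]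
    have hy : ∑ j, (t • w) j • u j = y := by
      simp [hwy, mul_smul, ← Finset.smul_sum, smul_inv_smul₀ ht.ne']
    refine ⟨t • w, ⟨fun j => mul_nonneg ht.le (hw0 j), fun h => ?_, ?_⟩, hwt, hy⟩
    · rw [h] at hwt
      simp only [Pi.zero_apply, Finset.sum_const_zero] at hwt
      exact ht.ne hwt
    · rwa [← g.mul_apply_inv_smul_sum _ _ (hwt.symm ▸ ht.ne'), hwt, hy]
  · rintro ⟨s, ⟨hs0, hs, hle⟩, rfl, rfl⟩
    have hpos : 0 < ∑ j, s j := by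
      obtain ⟨i, hi⟩ := Function.ne_iff.1 hs
      exact Finset.sum_pos' (fun j _ => hs0 j) ⟨i, Finset.mem_univ i, (hs0 i).lt_of_ne' hi⟩
    refine ⟨hpos, ⟨(∑ j, s j)⁻¹ • s, ⟨fun j => ?_, ?_⟩, ?_⟩, ?_⟩
    · exact mul_nonneg (inv_nonneg.2 hpos.le) (hs0 j)
    · simp [← Finset.mul_sum, inv_mul_cancel₀ hpos.ne']
    · simp [mul_smul, Finset.smul_sum]
    · rwa [g.mul_apply_inv_smul_sum _ _ hpos.ne']

/-- The linear map scaling the basis vector `(1, u j)` by `f (u j)`. -/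
theorem AffineIndependent.exists_det_eq_preimage_truncCone [AddCommGroup E] [Module ℝ E]
    [FiniteDimensional ℝ E] {n : ℕ} (hE : Module.finrank ℝ E = n) {u : Fin (n + 1) → E} (hu : AffineIndependent ℝ u)
    (f : E →ᵃ[ℝ] ℝ) (hf : ∀ j, 0 < f (u j)) :
    ∃ M : (ℝ × E) →ₗ[ℝ] ℝ × E, LinearMap.det M = ∏ j, f (u j) ∧
      M ⁻¹' truncCone (convexHull ℝ (range u)) 1 = truncCone (convexHull ℝ (range u)) f := by
  let B := basisOfLinearIndependentOfCardEqFinrank hu.linearIndependent_one_prod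
    (by simp [hE, add_comm])
  have hcone : ∀ g : E →ᵃ[ℝ] ℝ, truncCone (convexHull ℝ (range u)) g =
      B.equivFun ⁻¹' {s | 0 ≤ s ∧ s ≠ 0 ∧ ∑ j, s j * g (u j) ≤ 1} := by
    intro g
    rw [truncCone_convexHull_eq_image, ← B.equivFun.image_symm_eq_preimage]
    congr 1
    funext s
    simp [B, Module.Basis.equivFun_symm_apply]
  let D : (Fin (n + 1) → ℝ) →ₗ[ℝ] Fin (n + 1) → ℝ :=
    Matrix.toLin' (Matrix.diagonal fun j => f (u j))
  have hD : ∀ s, D s = (fun j => f (u j)) * s := fun s => by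
    ext j
    simp [D, Matrix.mulVec_diagonal]
  refine ⟨B.equivFun.symm.toLinearMap ∘ₗ D ∘ₗ B.equivFun.symm.symm.toLinearMap, ?_, ?_⟩
  · rw [LinearMap.det_conj, LinearMap.det_toLin', Matrix.det_diagonal]
  change _ ⁻¹' truncCone _ (AffineMap.const ℝ E (1 : ℝ)) = _
  rw [hcone, hcone]
  ext p
  simp only [mem_preimage, LinearMap.comp_apply, LinearEquiv.coe_coe, LinearEquiv.symm_symm,
    LinearEquiv.apply_symm_apply, hD, mem_ofPred_eq, AffineMap.const_apply, mul_one]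
  generalize B.equivFun p = s
  refine and_congr ?_ (and_congr ?_ ?_)
  · simp only [Pi.le_def, Pi.zero_apply, Pi.mul_apply, mul_nonneg_iff_of_pos_left (hf _)]
  · simp [funext_iff, (hf _).ne']
  · simp only [Pi.mul_apply, mul_comm]

variable [NormedAddCommGroup E] [NormedSpace ℝ E] {K : Set E} {g : E → ℝ}

theorem preimage_mk_truncCone_of_pos {t : ℝ} (ht : 0 < t) :
    Prod.mk t ⁻¹' truncCone K g = t • (K ∩ {y | t * g y ≤ 1}) := by
  ext z
  simp [truncCone, mem_smul_set_iff_inv_smul_mem₀ ht.ne', ht]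

theorem preimage_mk_truncCone_of_nonpos {t : ℝ} (ht : t ≤ 0) :
    Prod.mk t ⁻¹' truncCone K g = ∅ := by
  ext z
  simp [truncCone, ht.not_gt]

variable [MeasurableSpace E] [BorelSpace E]

theorem measurableSet_truncCone (hK : MeasurableSet K) (hg : Measurable g) :
    MeasurableSet (truncCone K g) := by
  have h : Measurable fun p : ℝ × E => p.1⁻¹ • p.2 := measurable_fst.inv.smul measurable_snd
  exact (measurableSet_lt measurable_const measurable_fst).inter
    ((h hK).inter (measurableSet_le (measurable_fst.mul (hg.comp h)) measurable_const))

variable [FiniteDimensional ℝ E] (μ : Measure E) [μ.IsAddHaarMeasure]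

theorem measure_preimage_mk_truncCone (hK : MeasurableSet K) (hg : Measurable g)
    (hgK : ∀ x ∈ K, 0 < g x) (t : ℝ) :
    μ (Prod.mk t ⁻¹' truncCone K g) = ∫⁻ y in K,
      (Ioc 0 (g y)⁻¹).indicator (fun t => ENNReal.ofReal (t ^ Module.finrank ℝ E)) t ∂μ := by
  rcases le_or_gt t 0 with ht | ht
  · rw [preimage_mk_truncCone_of_nonpos ht, measure_empty]
    simp [ht.not_gt]
  have hslice : EqOn (fun y => (Ioc 0 (g y)⁻¹).indicator
      (fun t => ENNReal.ofReal (t ^ Module.finrank ℝ E)) t)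
      ({y | t * g y ≤ 1}.indicator fun _ => ENNReal.ofReal (t ^ Module.finrank ℝ E)) K := by
    intro y hy
    simp only [indicator, mem_Ioc, ht, true_and, mem_ofPred_eq, inv_eq_one_div,
      le_div_iff₀ (hgK y hy)]
  have hmeas : MeasurableSet {y | t * g y ≤ 1} :=
    measurableSet_le (measurable_const.mul hg) measurable_const
  rw [setLIntegral_congr_fun hK hslice, lintegral_indicator_const hmeas,
    Measure.restrict_apply hmeas, preimage_mk_truncCone_of_pos ht, Measure.addHaar_smul,
    abs_of_pos (pow_pos ht _), inter_comm]

theorem volume_prod_truncCone {n : ℕ} (hE : Module.finrank ℝ E = n) (hK : MeasurableSet K)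
    (hg : Measurable g) (hgK : ∀ x ∈ K, 0 < g x) :
    (volume.prod μ) (truncCone K g) =
      ENNReal.ofReal (n + 1 : ℝ)⁻¹ * ∫⁻ x in K, ENNReal.ofReal ((g x ^ (n + 1))⁻¹) ∂μ := by
  subst hE
  set F : ℝ → E → ℝ≥0∞ := fun t y =>
    (Ioc 0 (g y)⁻¹).indicator (fun t => ENNReal.ofReal (t ^ Module.finrank ℝ E)) t
  have hF : Measurable (Function.uncurry F) := by
    change Measurable ({p : ℝ × E | p.1 ∈ Ioc 0 (g p.2)⁻¹}.indicator
      fun p => ENNReal.ofReal (p.1 ^ Module.finrank ℝ E))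
    refine Measurable.indicator (by fun_prop) ?_
    exact (measurableSet_lt measurable_const measurable_fst).inter
      (measurableSet_le measurable_fst (hg.comp measurable_snd).inv)
  calc (volume.prod μ) (truncCone K g)
      = ∫⁻ t, ∫⁻ y in K, F t y ∂μ := by
        rw [Measure.prod_apply (measurableSet_truncCone hK hg)]
        exact lintegral_congr (measure_preimage_mk_truncCone μ hK hg hgK)
    _ = ∫⁻ y in K, (∫⁻ t, F t y) ∂μ := lintegral_lintegral_swap hF.aemeasurable
    _ = ∫⁻ y in K, ENNReal.ofReal (Module.finrank ℝ E + 1 : ℝ)⁻¹ *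
          ENNReal.ofReal ((g y ^ (Module.finrank ℝ E + 1))⁻¹) ∂μ := by
        refine setLIntegral_congr_fun hK fun y hy => ?_
        rw [lintegral_indicator measurableSet_Ioc,
          setLIntegral_Ioc_zero_pow _ (inv_pos.2 (hgK y hy)).le,
          ← ENNReal.ofReal_mul (by positivity), inv_pow, div_eq_inv_mul]
    _ = _ := lintegral_const_mul' _ _ ENNReal.ofReal_ne_top

end TruncCone

theorem AffineIndependent.setLIntegral_convexHull_inv_pow {E : Type*} [NormedAddCommGroup E]
    [NormedSpace ℝ E] [MeasurableSpace E] [BorelSpace E] [FiniteDimensional ℝ E]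
    (μ : Measure E) [μ.IsAddHaarMeasure] {n : ℕ} (hE : Module.finrank ℝ E = n)
    {u : Fin (n + 1) → E} (hu : AffineIndependent ℝ u) (f : E →ᵃ[ℝ] ℝ) (hf : ∀ j, 0 < f (u j)) :
    ∫⁻ x in convexHull ℝ (range u), ENNReal.ofReal ((f x ^ (n + 1))⁻¹) ∂μ =
      μ (convexHull ℝ (range u)) / ENNReal.ofReal (∏ j, f (u j)) := by
  obtain ⟨M, hdet, hM⟩ := hu.exists_det_eq_preimage_truncCone hE f hf
  set K := convexHull ℝ (range u)
  have hK : MeasurableSet K := ((finite_range u).isCompact_convexHull ℝ).isClosed.measurableSet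
  have hfK : K ⊆ f ⁻¹' Ioi 0 :=
    convexHull_min (range_subset_iff.2 hf) ((convex_Ioi 0).affine_preimage f)
  have hprod : 0 < ∏ j, f (u j) := Finset.prod_pos fun j _ => hf j
  have hvol := volume_prod_truncCone μ hE hK f.continuous_of_finiteDimensional.measurable hfK
  rw [← hM, Measure.addHaar_preimage_linearMap _ (hdet ▸ hprod.ne'),
    volume_prod_truncCone (g := 1) μ hE hK measurable_const fun _ _ => one_pos, hdet] at hvol
  simp only [Pi.one_apply, one_pow, inv_one, ENNReal.ofReal_one, setLIntegral_one,
    abs_of_pos (inv_pos.2 hprod)] at hvol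
  rw [mul_left_comm, ENNReal.mul_right_inj (by simp; positivity) ENNReal.ofReal_ne_top] at hvol
  rw [← hvol, ENNReal.ofReal_inv_of_pos hprod, ENNReal.div_eq_inv_mul]

theorem Isometry.setLIntegral_image_hausdorffMeasure {X Y : Type*} [EMetricSpace X]
    [MeasurableSpace X] [BorelSpace X] [CompleteSpace X] [EMetricSpace Y] [MeasurableSpace Y]
    [BorelSpace Y] {ι : X → Y} (hι : Isometry ι) {d : ℝ} (hd : 0 ≤ d) (s : Set X)
    (F : Y → ℝ≥0∞) :
    ∫⁻ y in ι '' s, F y ∂μH[d] = ∫⁻ x in s, F (ι x) ∂μH[d] := by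
  have hι' := hι.isClosedEmbedding.measurableEmbedding
  rw [← hι'.lintegral_map]
  congr 1
  ext A hA
  rw [hι'.map_apply, Measure.restrict_apply hA, Measure.restrict_apply (hι'.measurable hA),
    ← image_preimage_inter, hι.hausdorffMeasure_image (Or.inl hd)]

theorem AffineIndependent.exists_affineIsometry_comp_eq {F : Type*} [NormedAddCommGroup F]
    [InnerProductSpace ℝ F] {n : ℕ} {v : Fin (n + 1) → F} (hv : AffineIndependent ℝ v) :
    ∃ (ι : EuclideanSpace ℝ (Fin n) →ᵃⁱ[ℝ] F) (u : Fin (n + 1) → EuclideanSpace ℝ (Fin n)),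
      ι ∘ u = v := by
  let W := vectorSpan ℝ (range v)
  have hW : Module.finrank ℝ W = n := hv.finrank_vectorSpan (Fintype.card_fin _)
  let L : EuclideanSpace ℝ (Fin n) ≃ₗᵢ[ℝ] W :=
    ((stdOrthonormalBasis ℝ W).reindex (finCongr hW)).repr.symm
  refine ⟨(AffineIsometryEquiv.constVAdd ℝ F (v 0)).toAffineIsometry.comp
    (W.subtypeₗᵢ.comp L.toLinearIsometry).toAffineIsometry,
    fun j => L.symm ⟨v j -ᵥ v 0, vsub_mem_vectorSpan ℝ (mem_range_self j) (mem_range_self 0)⟩, ?_⟩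
  ext1 j
  simp

theorem integral_simplex_inner_inv_pow_general (d : ℕ)
    (v : Fin d → EuclideanSpace ℝ (Fin d)) (hv : AffineIndependent ℝ v)
    (lam : EuclideanSpace ℝ (Fin d)) (hpos : ∀ j, 0 < ⟪lam, v j⟫) :
    ∫⁻ x in convexHull ℝ (Set.range v),
        ENNReal.ofReal ((⟪lam, x⟫ ^ d)⁻¹)
          ∂(μH[(d : ℝ) - 1] : Measure (EuclideanSpace ℝ (Fin d)))
      = μH[(d : ℝ) - 1] (convexHull ℝ (Set.range v))
          / ENNReal.ofReal (∏ j, ⟪lam, v j⟫) := by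
  rcases d with _ | n
  · simp
  obtain ⟨ι, u, rfl⟩ := hv.exists_affineIsometry_comp_eq
  have : (μH[n] : Measure (EuclideanSpace ℝ (Fin n))).IsAddHaarMeasure := by
    simpa using isAddHaarMeasure_hausdorffMeasure (E := EuclideanSpace ℝ (Fin n))
  rw [Nat.cast_add_one, add_sub_cancel_right, range_comp, ← ι.coe_toAffineMap,
    ← AffineMap.image_convexHull, ι.coe_toAffineMap,
    ι.isometry.setLIntegral_image_hausdorffMeasure n.cast_nonneg,
    ι.isometry.hausdorffMeasure_image (Or.inl n.cast_nonneg)]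
  exact (hv.of_comp ι.toAffineMap).setLIntegral_convexHull_inv_pow μH[n]
    finrank_euclideanSpace_fin ((innerₛₗ ℝ lam).toAffineMap.comp ι.toAffineMap) hpos

/-- The classical simplex integral formula: if `v₁, …, v_d` are affinely
independent points of `ℝ^d`, `Σ` is their convex hull, and `λ ∈ ℝ^d` satisfies
`⟪λ, vⱼ⟫ > 0` for all `j`, then
`∫_Σ ⟪λ, x⟫⁻ᵈ dμ(x) = μ(Σ) / ∏ⱼ ⟪λ, vⱼ⟫`,
where `μ` is `(d-1)`-dimensional Hausdorff measure. -/
theorem integral_simplex_inner_inv_pow (d : ℕ) (hd : 2 ≤ d)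
    (v : Fin d → EuclideanSpace ℝ (Fin d)) (hv : AffineIndependent ℝ v)
    (lam : EuclideanSpace ℝ (Fin d)) (hpos : ∀ j, 0 < ⟪lam, v j⟫) :
    ∫⁻ x in convexHull ℝ (Set.range v),
        ENNReal.ofReal ((⟪lam, x⟫ ^ d)⁻¹)
          ∂(μH[(d : ℝ) - 1] : Measure (EuclideanSpace ℝ (Fin d)))
      = μH[(d : ℝ) - 1] (convexHull ℝ (Set.range v))
          / ENNReal.ofReal (∏ j, ⟪lam, v j⟫) :=
  integral_simplex_inner_inv_pow_general d v hv lam hpos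
end

section
/- Let A be the 3-by-3 integer matrix with rows (1, 2, 0), (2, 5, 0), (2, 6, 1). Then A fixes the third standard basis vector, A e_3 = e_3, and consequently for every k >= 1 the matrix A^k has a zero entry (namely the (1,3) entry of A^k is 0); in particular no power of A has all entries positive, i.e. A is not primitive. (This is the claim of Section 5.5 of the paper: the flip matrix A_gamma associated to the complete flip sequence gamma on the torus, corresponding to the hyperbolic map R^2 L^2, is not primitive.) -/
/-- The flip matrix `A_γ` of Section 5.5 (corresponding to the hyperbolic map
`R²L²` on the torus) fixes the third standard basis vector, so every power of
it has a zero entry (the `(1,3)` entry); in particular it is not primitive. -/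
theorem flip_matrix_not_primitive :
    let A : Matrix (Fin 3) (Fin 3) ℤ := !![1, 2, 0; 2, 5, 0; 2, 6, 1]
    A.mulVec (Pi.single 2 1) = Pi.single 2 1
    ∧ (∀ k : ℕ, 1 ≤ k → (A ^ k) 0 2 = 0)
    ∧ (∀ k : ℕ, 1 ≤ k → ¬ ∀ i j, 0 < (A ^ k) i j) := by
  intro A
  have key : ∀ k : ℕ, 1 ≤ k → (A ^ k) 0 2 = 0 := by
    intro k hk
    induction k with
    | zero => omega
    | succ n ih =>
      rcases Nat.eq_or_lt_of_le hk with h | h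
      · have hn0 : n = 0 := by omega
        subst hn0
        simp [A, pow_one]
      · have hn : 1 ≤ n := by omega
        have : (A ^ (n + 1)) 0 2 = (A ^ n * A) 0 2 := by rw [pow_succ]
        rw [this, Matrix.mul_apply, Fin.sum_univ_three]
        have h0 : A 0 2 = 0 := by simp [A]
        have h1 : A 1 2 = 0 := by simp [A]
        have h2 : A 2 2 = 1 := by simp [A]
        rw [h0, h1, h2, ih hn]
        ring
  refine ⟨?_, key, ?_⟩
  · funext i
    fin_cases i <;> simp [A, Matrix.mulVec, dotProduct, Fin.sum_univ_three,
      Pi.single_apply]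
  · intro k hk h
    have := h 0 2
    rw [key k hk] at this
    exact lt_irrefl 0 this
end

section
/- For each integer n >= 1 let A_n be the 3-by-3 matrix with rows (1, 2, 0), (2n, 4n+1, 0), (2n, 4n+2, 1), and let L be the segment of points x = (a, 1/2 - a, 1/2) in R^3 with 0 <= a <= 1/2 (the segment between (1/2, 0, 1/2) and (0, 1/2, 1/2)). Then for every n and every x in L, 2n + 1 <= ||A_n x||_1 <= 4n + 3; in particular ||A_n x||_1 <= 3 * ||A_n x'||_1 for all x, x' in L, so the projectivized maps P A_n have uniformly bounded distortion on L. Meanwhile the l^1 norms of the columns of A_n are 4n+1, 8n+5, and 1, so the ratio of the largest to the smallest column norm equals 8n+5 and is unbounded in n. (This is the claim of Section 5.5 of the paper: an unbalanced flip matrix can nevertheless have bounded distortion on the parameter subspace of widths.) -/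
lemma aux_l1 (n : ℕ) (hn : 1 ≤ n) (a : ℝ) (h0 : 0 ≤ a) (h1 : a ≤ 1 / 2) :
    (∑ i, |(!![1, 2, 0; 2 * (n : ℝ), 4 * (n : ℝ) + 1, 0;
         2 * (n : ℝ), 4 * (n : ℝ) + 2, 1]).mulVec ![a, 1 / 2 - a, 1 / 2] i|)
      = 4 * (n : ℝ) + 3 - (4 * n + 4) * a := by
  have hn1 : (1 : ℝ) ≤ n := by exact_mod_cast hn
  simp [Matrix.mulVec, dotProduct, Fin.sum_univ_three, Matrix.cons_val_zero, Matrix.cons_val_one, Matrix.head_cons, Matrix.cons_val_two, Matrix.tail_cons, Matrix.vecHead, Matrix.vecTail, Function.comp]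
  rw [abs_of_nonneg (by nlinarith), abs_of_nonneg (by nlinarith),
    abs_of_nonneg (by nlinarith)]
  ring

/-- Section 5.5: the unbalanced flip matrices `A_n` (corresponding to the maps
`R^{2n}L²` on the torus) have uniformly bounded distortion on the width segment
`L` between `(1/2, 0, 1/2)` and `(0, 1/2, 1/2)`: for `x ∈ L` one has
`2n+1 ≤ ‖A_n x‖₁ ≤ 4n+3`, hence `‖A_n x‖₁ ≤ 3 ‖A_n x'‖₁`; meanwhile the `ℓ¹`
norms of the columns of `A_n` are `4n+1`, `8n+5` and `1`, so the ratio of the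
largest to the smallest column norm is `8n+5`, which is unbounded in `n`. -/
theorem unbalanced_matrix_bounded_distortion :
    let A : ℕ → Matrix (Fin 3) (Fin 3) ℝ := fun n =>
      !![1, 2, 0; 2 * (n : ℝ), 4 * (n : ℝ) + 1, 0;
         2 * (n : ℝ), 4 * (n : ℝ) + 2, 1]
    let l1 : (Fin 3 → ℝ) → ℝ := fun v => ∑ i, |v i|
    let L : Set (Fin 3 → ℝ) :=
      {x | ∃ a : ℝ, 0 ≤ a ∧ a ≤ 1 / 2 ∧ x = ![a, 1 / 2 - a, 1 / 2]}
    (∀ n : ℕ, 1 ≤ n → ∀ x ∈ L,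
        2 * (n : ℝ) + 1 ≤ l1 ((A n).mulVec x)
        ∧ l1 ((A n).mulVec x) ≤ 4 * (n : ℝ) + 3)
    ∧ (∀ n : ℕ, 1 ≤ n → ∀ x ∈ L, ∀ x' ∈ L,
        l1 ((A n).mulVec x) ≤ 3 * l1 ((A n).mulVec x'))
    ∧ (∀ n : ℕ, 1 ≤ n →
        l1 (fun i => A n i 0) = 4 * (n : ℝ) + 1
        ∧ l1 (fun i => A n i 1) = 8 * (n : ℝ) + 5
        ∧ l1 (fun i => A n i 2) = 1)
    ∧ (∀ n : ℕ, 1 ≤ n →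
        (l1 (fun i => A n i 1)) / (l1 (fun i => A n i 2)) = 8 * (n : ℝ) + 5)
    ∧ (∀ C : ℝ, ∃ n : ℕ, 1 ≤ n ∧ C < 8 * (n : ℝ) + 5) := by
  intro A l1 L
  refine ⟨?_, ?_, ?_, ?_, ?_⟩
  · rintro n hn x ⟨a, h0, h1, rfl⟩
    rw [show l1 ((A n).mulVec ![a, 1/2 - a, 1/2]) = 4 * (n : ℝ) + 3 - (4 * n + 4) * a from
      aux_l1 n hn a h0 h1]
    constructor <;> nlinarith
  · rintro n hn x ⟨a, h0, h1, rfl⟩ x' ⟨b, h0', h1', rfl⟩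
    have hn1 : (1 : ℝ) ≤ n := by exact_mod_cast hn
    rw [show l1 ((A n).mulVec ![a, 1/2 - a, 1/2]) = 4 * (n : ℝ) + 3 - (4 * n + 4) * a from
      aux_l1 n hn a h0 h1,
      show l1 ((A n).mulVec ![b, 1/2 - b, 1/2]) = 4 * (n : ℝ) + 3 - (4 * n + 4) * b from
      aux_l1 n hn b h0' h1']
    nlinarith
  · intro n hn
    have hn1 : (1 : ℝ) ≤ n := by exact_mod_cast hn
    refine ⟨?_, ?_, ?_⟩ <;>
      · simp [l1, A, Fin.sum_univ_three, Matrix.cons_val_zero, Matrix.cons_val_one, Matrix.head_cons, Matrix.cons_val_two, Matrix.tail_cons, Matrix.vecHead, Matrix.vecTail, Function.comp]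
        try rw [abs_of_nonneg (by positivity)]
        try rw [abs_of_nonneg (by positivity)]
        try ring
  · intro n hn
    have hn1 : (1 : ℝ) ≤ n := by exact_mod_cast hn
    simp [l1, A, Fin.sum_univ_three, Matrix.cons_val_zero, Matrix.cons_val_one, Matrix.head_cons, Matrix.cons_val_two, Matrix.tail_cons, Matrix.vecHead, Matrix.vecTail, Function.comp]
    try rw [abs_of_nonneg (by positivity)]
    try rw [abs_of_nonneg (by positivity)]
    try ring
  · intro C
    obtain ⟨n, hn⟩ := exists_nat_gt C
    exact ⟨n + 1, le_add_self, by push_cast; nlinarith [hn]⟩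
end
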